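/- arXiv:0905.4391 — 2 statements merged into one kernel-verified Lean document; each statement's English description precedes it below -/
import Mathlib

section
/- Let G be a finite connected simple graph on n vertices with distinguished vertices v_in ≠ v_out such that the induced subgraph G − v_out is connected. If G is bipartite, then the affine span H in ℝ^V of the set { tr_ω : ω a proper walk from v_in to v_out } has dimension n − 2. -/
open scoped Classical

noncomputable section

/-- The trace of a walk: the number of occurrences of each vertex along the walk,
viewed as a vector in `ℝ^V`. -/
def trace {V : Type*} [DecidableEq V] {G : SimpleGraph V} {u v : V} (ω : G.Walk u v) : V → ℝ :=
  fun x => (ω.support.count x : ℝ)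

/-- A walk from `vin` to `vout` is proper if it visits `vout` exactly once
(namely as its final vertex). -/
def IsProper {V : Type*} [DecidableEq V] {G : SimpleGraph V} {vin vout : V}
    (ω : G.Walk vin vout) : Prop :=
  ω.support.count vout = 1

/-- The set of traces of proper walks from `vin` to `vout`, as vectors in `ℝ^V`. -/
def traceSet {V : Type*} [DecidableEq V] (G : SimpleGraph V) (vin vout : V) : Set (V → ℝ) :=
  {f | ∃ ω : G.Walk vin vout, IsProper ω ∧ f = trace ω}

/-- `Ψ(G)`: the relative interior (interior with respect to the affine span) of the convex
hull of the traces of proper walks from `vin` to `vout`. -/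
def Psi {V : Type*} [Fintype V] [DecidableEq V] (G : SimpleGraph V) (vin vout : V) :
    Set (V → ℝ) :=
  intrinsicInterior ℝ (convexHull ℝ (traceSet G vin vout))

/-- The matrix `M_β` associated to a graph `G` with distinguished vertices `vin, vout`
and vertex weights `β`. -/
def Mmat {V : Type*} [Fintype V] [DecidableEq V] (G : SimpleGraph V) (vin vout : V)
    (β : V → ℝ) : Matrix V V ℝ :=
  fun v w =>
    if (v = vout ∧ w = vout) ∨ (v = vin ∧ w = vout) then 1
    else if G.Adj v w ∧ v ≠ vout ∧ w ≠ vout then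
      β v / ∑ u ∈ Finset.univ.filter (fun u => G.Adj u w), β u
    else 0

/-- The equation `τ_ρ = r` is solvable on `G`: there is a positive vertex-weight function `β`
with `M_β r = r` and `r(vout) = 1`. -/
def Solvable {V : Type*} [Fintype V] [DecidableEq V] (G : SimpleGraph V) (vin vout : V)
    (r : V → ℝ) : Prop :=
  ∃ β : V → ℝ, (∀ v, 0 < β v) ∧ (Mmat G vin vout β).mulVec r = r ∧ r vout = 1

/-!
Colour the bipartite graph by a sign `σ : V → {±1}` that flips along every edge. Along any walk
from `u` to `v` consecutive vertices cancel in `∑ σ x · tr x`, which therefore equals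
`(σ u + σ v) / 2`; together with `tr vout = 1` this puts all traces of proper walks in an affine
subspace of codimension two. Conversely, inserting a back-and-forth detour along an edge `ab` of
`G - vout` into a proper walk adds `e_a + e_b` to its trace, and chaining these differences along
walks in `G - vout` yields `σ x • e_vin - σ vin • e_x` for every `x ≠ vout`; these span the whole
direction of that subspace.
-/

open SimpleGraph

section Graph

variable {V : Type*} {G : SimpleGraph V}

def SimpleGraph.Coloring.sign (C : G.Coloring (Fin 2)) (x : V) : ℝ := (-1) ^ (C x : ℕ)

lemma SimpleGraph.Coloring.sign_ne_zero (C : G.Coloring (Fin 2)) (x : V) : C.sign x ≠ 0 :=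
  pow_ne_zero _ (by norm_num)

lemma SimpleGraph.Coloring.sign_eq_neg_of_adj (C : G.Coloring (Fin 2)) {a b : V} (h : G.Adj a b) :
    C.sign a = -C.sign b := by
  have hab := C.valid h
  unfold Coloring.sign
  generalize C a = i at hab
  generalize C b = j at hab
  fin_cases i <;> fin_cases j <;> simp_all

lemma SimpleGraph.Connected.exists_walk_support_subset_of_induce {s : Set V}
    (h : (G.induce s).Connected) {u v : V} (hu : u ∈ s) (hv : v ∈ s) :
    ∃ p : G.Walk u v, ∀ x ∈ p.support, x ∈ s := by
  obtain ⟨q⟩ := h.preconnected ⟨u, hu⟩ ⟨v, hv⟩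
  let p : G.Walk u v := q.map (Embedding.induce s).toHom
  refine ⟨p, fun x hx => ?_⟩
  obtain ⟨y, -, rfl⟩ := List.mem_map.mp (Walk.support_map _ q ▸ hx)
  exact y.2

end Graph

section Walk

variable {R V : Type*} [CommRing R] [DecidableEq V] {G : SimpleGraph V}

lemma SimpleGraph.Walk.smul_single_sub_smul_single_mem {W : Submodule R (V → R)} {σ : V → R}
    (hσ : ∀ ⦃a b⦄, G.Adj a b → σ a = -σ b) {s : Set V}
    (hW : ∀ ⦃a b⦄, G.Adj a b → a ∈ s → b ∈ s → Pi.single a 1 + Pi.single b 1 ∈ W) {u v : V}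
    (p : G.Walk u v) (hp : ∀ x ∈ p.support, x ∈ s) :
    σ v • Pi.single u 1 - σ u • Pi.single v 1 ∈ W := by
  induction p with
  | nil => simp
  | @cons a b c hab p ih =>
    have hs : ∀ x ∈ p.support, x ∈ s := fun x hx => hp x (List.mem_cons_of_mem _ hx)
    have hedge := hW hab (hp a List.mem_cons_self) (hs b p.start_mem_support)
    have key : σ c • Pi.single a (1 : R) - σ a • Pi.single c 1
        = σ c • (Pi.single a 1 + Pi.single b 1) - (σ c • Pi.single b 1 - σ b • Pi.single c 1) := by
      rw [hσ hab]; module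
    rw [key]
    exact W.sub_mem (W.smul_mem _ hedge) (ih hs)

end Walk

section Trace

variable {V : Type*} [DecidableEq V] {G : SimpleGraph V}

@[simp]
lemma trace_nil {u : V} : trace (Walk.nil : G.Walk u u) = Pi.single u 1 := by
  funext x
  by_cases h : x = u <;> simp [trace, h, Ne.symm]

@[simp]
lemma trace_cons {u v w : V} (h : G.Adj u v) (p : G.Walk v w) :
    trace (Walk.cons h p) = Pi.single u 1 + trace p := by
  funext x
  by_cases hx : x = u <;> simp [trace, hx, Ne.symm, add_comm]

lemma trace_append {u v w : V} (p : G.Walk u v) (q : G.Walk v w) :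
    trace (p.append q) = trace p + trace q - Pi.single v 1 := by
  induction p with
  | nil => simp
  | cons h p ih => rw [Walk.cons_append, trace_cons, trace_cons, ih]; abel

lemma linearCombination_trace [Fintype V] {σ : V → ℝ} (hσ : ∀ ⦃a b⦄, G.Adj a b → σ a = -σ b)
    {u v : V} (p : G.Walk u v) : Fintype.linearCombination ℝ σ (trace p) = (σ u + σ v) / 2 := by
  induction p with
  | nil => simp
  | cons h p ih => rw [trace_cons, map_add, ih, Fintype.linearCombination_apply_single, hσ h]; ring

variable {vin vout : V}

lemma IsProper.trace_eq_one {ω : G.Walk vin vout} (hω : IsProper ω) : trace ω vout = 1 := by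
  unfold IsProper at hω
  simp [trace, hω]

lemma SimpleGraph.Walk.IsPath.isProper {p : G.Walk vin vout} (hp : p.IsPath) : IsProper p :=
  List.count_eq_one_of_mem hp.support_nodup p.end_mem_support

lemma IsProper.cons {u v : V} {p : G.Walk v vout} (hp : IsProper p) (h : G.Adj u v)
    (hu : u ≠ vout) : IsProper (Walk.cons h p) := by
  simpa [IsProper, List.count_cons, hu] using hp

lemma IsProper.append_of_notMem {u v : V} {p : G.Walk u v} (hp : vout ∉ p.support)
    {q : G.Walk v vout} (hq : IsProper q) : IsProper (p.append q) := by
  have hv : v ≠ vout := fun h => hp (h ▸ p.end_mem_support)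
  rw [IsProper, ← q.cons_tail_support, List.count_cons] at hq
  simpa [IsProper, Walk.support_append, List.count_eq_zero_of_not_mem hp, hv] using hq

lemma single_add_single_mem_vectorSpan_traceSet {a b : V} {q : G.Walk vin a}
    (hq : vout ∉ q.support) {r : G.Walk a vout} (hr : IsProper r) (hab : G.Adj a b)
    (hb : b ≠ vout) : Pi.single a 1 + Pi.single b 1 ∈ vectorSpan ℝ (traceSet G vin vout) := by
  have ha : a ≠ vout := fun h => hq (h ▸ q.end_mem_support)
  have hdetour : IsProper (q.append (.cons hab (.cons hab.symm r))) :=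
    ((hr.cons hab.symm hb).cons hab ha).append_of_notMem hq
  have hdirect : IsProper (q.append r) := hr.append_of_notMem hq
  have hdiff : Pi.single a 1 + Pi.single b 1 =
      trace (q.append (.cons hab (.cons hab.symm r))) -ᵥ trace (q.append r) := by
    simp only [vsub_eq_sub, trace_append, trace_cons]
    abel
  rw [hdiff]
  exact vsub_mem_vectorSpan ℝ ⟨_, hdetour, rfl⟩ ⟨_, hdirect, rfl⟩

end Trace

section LinearAlgebra

variable {K ι : Type*} [Field K] [Fintype ι] [DecidableEq ι]

lemma vectorSpan_le_ker_of_forall_eq {E F : Type*} [AddCommGroup E] [Module K E]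
    [AddCommGroup F] [Module K F] {s : Set E} (Φ : E →ₗ[K] F) {c : F}
    (h : ∀ x ∈ s, Φ x = c) : vectorSpan K s ≤ LinearMap.ker Φ := by
  rw [vectorSpan_def, Submodule.span_le]
  rintro _ ⟨x, hx, y, hy, rfl⟩
  simp [h x hx, h y hy]

lemma finrank_ker_proj_prod {a b : ι} (hab : a ≠ b) (ℓ : (ι → K) →ₗ[K] K)
    (hb : ℓ (Pi.single b 1) ≠ 0) :
    Module.finrank K (LinearMap.ker ((LinearMap.proj a).prod ℓ)) = Fintype.card ι - 2 := by
  have hsurj : Function.Surjective ((LinearMap.proj a).prod ℓ) := by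
    intro z
    refine ⟨z.1 • Pi.single a 1 + ((z.2 - z.1 * ℓ (Pi.single a 1)) / ℓ (Pi.single b 1)) •
      Pi.single b 1, ?_⟩
    ext
    · simp [hab.symm]
    · simp [hb]
  have h := ((LinearMap.proj a).prod ℓ).finrank_range_add_finrank_ker
  rw [LinearMap.range_eq_top.mpr hsurj, finrank_top, Module.finrank_prod, Module.finrank_self,
    Module.finrank_fintype_fun_eq_card] at h
  omega

lemma ker_proj_prod_linearCombination_le {W : Submodule K (ι → K)} {σ : ι → K} {a b : ι}
    (hb : σ b ≠ 0) (hW : ∀ x ≠ a, σ x • Pi.single b 1 - σ b • Pi.single x 1 ∈ W) :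
    LinearMap.ker ((LinearMap.proj a).prod (Fintype.linearCombination K σ)) ≤ W := by
  intro f hf
  simp only [LinearMap.mem_ker, LinearMap.prod_apply, Function.prod, LinearMap.proj_apply,
    Fintype.linearCombination_apply, smul_eq_mul, Prod.mk_eq_zero] at hf
  have hsum : ∑ x, f x • (σ x • Pi.single b 1 - σ b • Pi.single x 1) = -(σ b • f) := by
    simp_rw [smul_sub, Finset.sum_sub_distrib, smul_smul]
    rw [← Finset.sum_smul, hf.2, zero_smul, zero_sub, neg_inj]
    simp_rw [mul_comm (f _), ← smul_smul, ← Finset.smul_sum, ← pi_eq_sum_univ']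
  have hmem : σ b • f ∈ W := by
    rw [← neg_neg (σ b • f), ← hsum]
    refine W.neg_mem (W.sum_mem fun x _ => ?_)
    by_cases hx : x = a
    · simp [hx, hf.1]
    · exact W.smul_mem _ (hW x hx)
  exact (W.smul_mem_iff hb).mp hmem

end LinearAlgebra

section TraceSet

variable {V : Type*} [Fintype V] [DecidableEq V] {G : SimpleGraph V} {vin vout : V}

lemma vectorSpan_traceSet_le_ker {σ : V → ℝ} (hσ : ∀ ⦃a b⦄, G.Adj a b → σ a = -σ b) :
    vectorSpan ℝ (traceSet G vin vout) ≤
      LinearMap.ker ((LinearMap.proj vout).prod (Fintype.linearCombination ℝ σ)) :=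
  vectorSpan_le_ker_of_forall_eq _ (c := (1, (σ vin + σ vout) / 2)) <| by
    rintro _ ⟨ω, hω, rfl⟩
    simp [hω.trace_eq_one, linearCombination_trace hσ]

lemma ker_le_vectorSpan_traceSet (hG : G.Connected) (hconn : (G.induce {x | x ≠ vout}).Connected)
    (hne : vin ≠ vout) {σ : V → ℝ} (hσ : ∀ ⦃a b⦄, G.Adj a b → σ a = -σ b) (hσvin : σ vin ≠ 0) :
    LinearMap.ker ((LinearMap.proj vout).prod (Fintype.linearCombination ℝ σ)) ≤
      vectorSpan ℝ (traceSet G vin vout) := by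
  have hedge : ∀ ⦃a b⦄, G.Adj a b → a ∈ {x | x ≠ vout} → b ∈ {x | x ≠ vout} →
      Pi.single a 1 + Pi.single b 1 ∈ vectorSpan ℝ (traceSet G vin vout) := by
    intro a b hab ha hb
    obtain ⟨q, hq⟩ := hconn.exists_walk_support_subset_of_induce hne ha
    exact single_add_single_mem_vectorSpan_traceSet (fun h => hq _ h rfl)
      (hG.preconnected a vout).some.toPath.2.isProper hab hb
  refine ker_proj_prod_linearCombination_le hσvin fun x hx => ?_
  obtain ⟨p, hp⟩ := hconn.exists_walk_support_subset_of_induce hne hx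
  exact p.smul_single_sub_smul_single_mem hσ hedge hp

end TraceSet

/-- If `G` is connected, `G - vout` is connected and `G` is bipartite, then the affine
span of the traces of proper walks has dimension `n - 2`. -/
theorem affineSpan_traces_dim_bipartite (n : ℕ) {V : Type*} [Fintype V] [DecidableEq V]
    (hcard : Fintype.card V = n) (G : SimpleGraph V) (hG : G.Connected)
    (vin vout : V) (hne : vin ≠ vout)
    (hconn : (G.induce {x | x ≠ vout}).Connected)
    (hbip : G.Colorable 2) :
    Module.finrank ℝ (affineSpan ℝ (traceSet G vin vout)).direction = n - 2 := by
  obtain ⟨C⟩ := hbip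
  have hσ : ∀ ⦃a b⦄, G.Adj a b → C.sign a = -C.sign b := fun _ _ => C.sign_eq_neg_of_adj
  rw [direction_affineSpan, le_antisymm (vectorSpan_traceSet_le_ker hσ)
    (ker_le_vectorSpan_traceSet hG hconn hne hσ (C.sign_ne_zero vin)),
    finrank_ker_proj_prod hne.symm _ (by simpa using C.sign_ne_zero vin), hcard]

end
end

section
/- Let G be the path graph on vertices v_1, v_2, …, v_n (n ≥ 3, with v_j adjacent to v_{j+1} for 1 ≤ j ≤ n−1), with v_out = v_1 and v_in = v_n. Then for any r ∈ ℝ^n, the equation τ_ρ = r is solvable on G if and only if r ∈ Ψ(G). -/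
open scoped Classical

noncomputable section

/-!
Number the path so that `vout = 0` and `vin = n - 1`. A walk from `n - 1` to `0` crosses every
edge `{k, k + 1}` downwards once more than upwards, so a proper walk crossing it upwards `b k`
times visits `p` exactly `1 + b (p - 1) + b p` times, where `b 0 = b (n - 1) = 0`; conversely any
`b ∈ ℕ^{n-2}` is realised by a walk that descends and bounces `b k` times across each edge. Hence
the traces are the image of the lattice points of an orthant under an affine bijection of `ℝ^n`,
and `Ψ(G)` is the image of the open orthant.

On the other side, with `ρ v = r v / ∑_{u ∼ v} β u`, the equation `M_β r = r` is Kirchhoff's law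
for the flow `β u ρ v - β v ρ u` with a unit source at `vin` and sink at `vout`. On the path it says
that one unit flows down every edge, and then `b k = β (k + 1) ρ k`, the expected number of upward
crossings, is positive with `r p = 1 + b (p - 1) + b p`. Conversely, any positive `b` is realised
by weights defined by a two-step recursion.
-/

section Kirchhoff

open Finset

variable {V : Type*} [Fintype V] {G : SimpleGraph V} {β r : V → ℝ}

def neighborSum (G : SimpleGraph V) (f : V → ℝ) (v : V) : ℝ :=
  ∑ u ∈ univ.filter (fun u => G.Adj u v), f u

theorem neighborSum_pos (hβ : ∀ v, 0 < β v) {v : V} (hv : ∃ u, G.Adj u v) :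
    0 < neighborSum G β v := by
  obtain ⟨u, hu⟩ := hv
  exact sum_pos (fun t _ => hβ t) ⟨u, by simpa using hu⟩

variable [DecidableEq V] {vin vout : V}

theorem Mmat_mulVec_vout : (Mmat G vin vout β).mulVec r vout = r vout := by
  rw [Matrix.mulVec, dotProduct, sum_eq_single vout (fun w _ hw => by simp [Mmat, hw])
    (by simp)]
  simp [Mmat]

theorem Mmat_mulVec_of_ne {v : V} (hv : v ≠ vout) :
    (Mmat G vin vout β).mulVec r v = (if v = vin then r vout else 0) +
      β v * neighborSum G (fun u => if u = vout then 0 else r u / neighborSum G β u) v := by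
  have hentry : ∀ w, Mmat G vin vout β v w * r w = (if v = vin ∧ w = vout then r w else 0) +
      if G.Adj w v then β v * (if w = vout then 0 else r w / neighborSum G β w) else 0 := by
    intro w
    by_cases hw : w = vout
    · subst hw; by_cases hvin : v = vin <;> simp [Mmat, hv, hvin]
    · by_cases hadj : G.Adj v w
      · simp [Mmat, neighborSum, hv, hw, hadj, hadj.symm, div_mul_eq_mul_div, mul_div_assoc']
      · simp [Mmat, hw, hadj, G.adj_comm w v]
  simp only [Matrix.mulVec, dotProduct, hentry, sum_add_distrib]
  rw [neighborSum, mul_sum, sum_filter]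
  congr 1
  by_cases hvin : v = vin <;> simp [hvin]

theorem solvable_iff_exists_potential (hnbr : ∀ v, v ≠ vout → ∃ u, G.Adj u v) :
    Solvable G vin vout r ↔ ∃ β ρ : V → ℝ, (∀ v, 0 < β v) ∧ r vout = 1 ∧ ρ vout = 0 ∧
      ∀ v, v ≠ vout → r v = ρ v * neighborSum G β v ∧
        neighborSum G β v * ρ v - β v * neighborSum G ρ v = if v = vin then 1 else 0 := by
  constructor
  · rintro ⟨β, hβ, hM, hr⟩
    refine ⟨β, fun u => if u = vout then 0 else r u / neighborSum G β u, hβ, hr, by simp,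
      fun v hv => ⟨?_, ?_⟩⟩
    · simp [hv, div_mul_cancel₀ _ (neighborSum_pos hβ (hnbr v hv)).ne']
    · have hrow := congrFun hM v
      rw [Mmat_mulVec_of_ne hv, hr] at hrow
      simp only [hv, if_false, mul_div_cancel₀ _ (neighborSum_pos hβ (hnbr v hv)).ne']
      by_cases hvin : v = vin <;> simp only [hvin, if_true, if_false] at hrow ⊢ <;> linarith
  · rintro ⟨β, ρ, hβ, hr, hρ, hv⟩
    refine ⟨β, hβ, funext fun v => ?_, hr⟩
    by_cases hvout : v = vout
    · subst hvout; exact Mmat_mulVec_vout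
    have hpot : (fun u => if u = vout then 0 else r u / neighborSum G β u) = ρ := by
      funext u
      by_cases hu : u = vout
      · simp [hu, hρ]
      · simp [hu, (hv u hu).1, mul_div_cancel_right₀ _ (neighborSum_pos hβ (hnbr u hu)).ne']
    rw [Mmat_mulVec_of_ne hvout, hpot, hr, (hv v hvout).1]
    have hflow := (hv v hvout).2
    by_cases hvin : v = vin <;> simp only [hvin, if_true, if_false] at hflow ⊢ <;> linarith

end Kirchhoff

theorem SimpleGraph.Walk.count_support_eq_countP_fst {V : Type*} [DecidableEq V]
    {G : SimpleGraph V} {u v : V} (p : G.Walk u v) (x : V) :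
    p.support.count x = p.darts.countP (fun d => d.fst = x) + if v = x then 1 else 0 := by
  rw [← p.map_fst_darts_append, List.count_append, List.count_eq_countP, List.countP_map,
    List.count_singleton']
  rfl

section Orthant

open Set

theorem convexHull_range_natCast : convexHull ℝ (range ((↑) : ℕ → ℝ)) = Ici 0 := by
  refine (convexHull_min (range_subset_iff.mpr fun m => mem_Ici.mpr m.cast_nonneg)
    (convex_Ici 0)).antisymm fun y hy => ?_
  have hfloor := Nat.lt_floor_add_one y
  refine segment_subset_convexHull (mem_range_self ⌊y⌋₊) (mem_range_self (⌊y⌋₊ + 1)) ?_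
  rw [segment_eq_Icc (by push_cast; linarith)]
  exact ⟨Nat.floor_le hy, by push_cast; linarith⟩

theorem intrinsicInterior_eq_interior_of_nonempty {V : Type*} [NormedAddCommGroup V]
    [NormedSpace ℝ V] {s : Set V} (h : (interior s).Nonempty) :
    intrinsicInterior ℝ s = interior s := by
  have hspan : affineSpan ℝ s = ⊤ :=
    top_unique <| isOpen_interior.affineSpan_eq_top h ▸ affineSpan_mono ℝ interior_subset
  have hemb : Topology.IsOpenEmbedding ((↑) : affineSpan ℝ s → V) :=
    (show IsOpen (affineSpan ℝ s : Set V) by simp [hspan]).isOpenEmbedding_subtypeVal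
  rw [intrinsicInterior, ← hemb.isOpenMap.preimage_interior_eq_interior_preimage hemb.continuous,
    image_preimage_eq_inter_range]
  simp [hspan]

theorem intrinsicInterior_pi_Ici {ι : Type*} [Fintype ι] (a : ℝ) :
    intrinsicInterior ℝ (univ.pi fun _ : ι => Ici a) = univ.pi fun _ => Ioi a := by
  have h : interior (univ.pi fun _ : ι => Ici a) = univ.pi fun _ => Ioi a := by
    rw [interior_pi_set finite_univ]
    simp only [interior_Ici]
  rw [intrinsicInterior_eq_interior_of_nonempty (s := univ.pi fun _ : ι => Ici a)
    (h ▸ ⟨fun _ => a + 1, by simp⟩), h]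

def piSplit (R : Type*) [Semiring R] {ι M : Type*} [AddCommMonoid M] [Module R M]
    (p : ι → Prop) [DecidablePred p] : (ι → M) ≃ₗ[R] ({i // p i} → M) × ({i // ¬p i} → M) :=
  (LinearEquiv.funCongrLeft R M (Equiv.sumCompl p)).trans
    (LinearEquiv.sumArrowLequivProdArrow _ _ R M)

theorem piSplit_symm_apply (R : Type*) [Semiring R] {ι M : Type*} [AddCommMonoid M]
    [Module R M] (p : ι → Prop) [DecidablePred p] (a : {i // p i} → M) (c : {i // ¬p i} → M)
    (i : ι) : (piSplit R p).symm (a, c) i = if h : p i then a ⟨i, h⟩ else c ⟨i, h⟩ := by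
  by_cases h : p i <;> simp [piSplit, h, LinearEquiv.funCongrLeft, Equiv.sumCompl]

end Orthant

section PathGraph

open SimpleGraph Finset

variable {n : ℕ}

def extendByZero (f : Fin n → ℝ) (k : ℕ) : ℝ := if h : k < n then f ⟨k, h⟩ else 0

@[simp] theorem extendByZero_val (f : Fin n → ℝ) (p : Fin n) : extendByZero f p = f p := by
  simp [extendByZero]

theorem extendByZero_of_le (f : Fin n → ℝ) {k : ℕ} (hk : n ≤ k) : extendByZero f k = 0 := by
  simp [extendByZero, hk]

theorem extendByZero_restrict (g : ℕ → ℝ) (k : ℕ) :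
    extendByZero (fun p : Fin n => g p) k = if k < n then g k else 0 := by
  simp [extendByZero]

theorem extendByZero_pos {β : Fin n → ℝ} (hβ : ∀ v, 0 < β v) {k : ℕ} (hk : k < n) :
    0 < extendByZero β k := by
  simp [extendByZero, hk, hβ]

theorem sum_ite_val_eq_extendByZero (f : Fin n → ℝ) (k : ℕ) :
    ∑ u : Fin n, (if (u : ℕ) = k then f u else 0) = extendByZero f k := by
  by_cases hk : k < n
  · have hval : ∀ u : Fin n, (u : ℕ) = k ↔ u = ⟨k, hk⟩ := fun u => by simp [Fin.ext_iff]
    simp [extendByZero, hk, hval]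
  · simp [extendByZero, hk, show ∀ u : Fin n, (u : ℕ) ≠ k from fun u => by omega]

theorem neighborSum_pathGraph (f : Fin n → ℝ) {v : Fin n} (hv : (v : ℕ) ≠ 0) :
    neighborSum (pathGraph n) f v = extendByZero f (v - 1) + extendByZero f (v + 1) := by
  have hsplit : ∀ u : Fin n, (if (pathGraph n).Adj u v then f u else 0) =
      (if (u : ℕ) = v - 1 then f u else 0) + (if (u : ℕ) = v + 1 then f u else 0) := by
    intro u
    simp only [pathGraph_adj]
    split_ifs <;> first | (exfalso; omega) | simp
  rw [neighborSum, sum_filter, Finset.sum_congr rfl fun u _ => hsplit u, sum_add_distrib,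
    sum_ite_val_eq_extendByZero, sum_ite_val_eq_extendByZero]

/-- The expected net number of crossings of the edge `{j, j + 1}` downwards. -/
def edgeCurrent (β ρ : Fin n → ℝ) (j : ℕ) : ℝ :=
  extendByZero β j * extendByZero ρ (j + 1) - extendByZero β (j + 1) * extendByZero ρ j

theorem edgeCurrent_pred (β ρ : Fin n → ℝ) (h0 : 0 < n) : edgeCurrent β ρ (n - 1) = 0 := by
  simp [edgeCurrent, Nat.sub_add_cancel h0, extendByZero_of_le]

theorem outflow_pathGraph (β ρ : Fin n → ℝ) {v : Fin n} (hv : (v : ℕ) ≠ 0) :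
    neighborSum (pathGraph n) β v * ρ v - β v * neighborSum (pathGraph n) ρ v =
      edgeCurrent β ρ (v - 1) - edgeCurrent β ρ v := by
  rw [neighborSum_pathGraph β hv, neighborSum_pathGraph ρ hv, edgeCurrent, edgeCurrent,
    Nat.sub_add_cancel (Nat.one_le_iff_ne_zero.mpr hv), extendByZero_val, extendByZero_val]
  ring

theorem forall_eq_one_iff_forall_sub_eq {φ : ℕ → ℝ} (hlast : φ (n - 1) = 0) :
    (∀ k, 1 ≤ k → k < n → φ (k - 1) - φ k = if k = n - 1 then 1 else 0) ↔
      ∀ j, j + 1 < n → φ j = 1 := by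
  constructor
  · intro h
    have hdown : ∀ i, i + 1 < n → φ (n - 2 - i) = 1 := by
      intro i
      induction i with
      | zero =>
        intro hi
        have := h (n - 1) (by omega) (by omega)
        rw [if_pos rfl, hlast, show n - 1 - 1 = n - 2 by omega] at this
        simpa using this
      | succ i ih =>
        intro hi
        have := h (n - 2 - i) (by omega) (by omega)
        rw [if_neg (by omega), show n - 2 - i - 1 = n - 2 - (i + 1) by omega,
          ih (by omega)] at this
        linarith
    intro j hj
    simpa [show n - 2 - (n - 2 - j) = j by omega] using hdown (n - 2 - j) (by omega)
  · intro h k hk1 hkn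
    by_cases hk : k = n - 1
    · rw [if_pos hk, h (k - 1) (by omega), hk, hlast]; norm_num
    · rw [if_neg hk, h (k - 1) (by omega), h k (by omega)]; norm_num

def IsUnitFlow (h0 : 0 < n) (r β ρ : Fin n → ℝ) : Prop :=
  (∀ v, 0 < β v) ∧ r ⟨0, h0⟩ = 1 ∧ ρ ⟨0, h0⟩ = 0 ∧
    (∀ v : Fin n, (v : ℕ) ≠ 0 → r v = ρ v * (extendByZero β (v - 1) + extendByZero β (v + 1))) ∧
    ∀ j, j + 1 < n → edgeCurrent β ρ j = 1

theorem solvable_pathGraph_iff (h0 : 0 < n) (r : Fin n → ℝ) :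
    Solvable (pathGraph n) ⟨n - 1, by omega⟩ ⟨0, h0⟩ r ↔ ∃ β ρ, IsUnitFlow h0 r β ρ := by
  have hne : ∀ v : Fin n, v ≠ ⟨0, h0⟩ ↔ (v : ℕ) ≠ 0 := by simp [Fin.ext_iff]
  have hnbr : ∀ v : Fin n, v ≠ ⟨0, h0⟩ → ∃ u, (pathGraph n).Adj u v := fun v hv =>
    ⟨⟨v - 1, by omega⟩,
      pathGraph_adj.mpr (Or.inl (Nat.sub_add_cancel (Nat.one_le_iff_ne_zero.mpr ((hne v).mp hv))))⟩
  rw [solvable_iff_exists_potential hnbr]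
  refine exists₂_congr fun β ρ => and_congr_right' <| and_congr_right' <| and_congr_right' ?_
  simp only [imp_and, forall_and, hne]
  refine and_congr (forall₂_congr fun v hv => by rw [neighborSum_pathGraph β hv]) ?_
  rw [← forall_eq_one_iff_forall_sub_eq (edgeCurrent_pred β ρ h0)]
  constructor
  · intro h k hk hkn
    have hk0 : ((⟨k, hkn⟩ : Fin n) : ℕ) ≠ 0 := Nat.one_le_iff_ne_zero.mp hk
    simpa [outflow_pathGraph β ρ hk0, Fin.ext_iff] using h ⟨k, hkn⟩ hk0
  · intro h v hv
    simpa [outflow_pathGraph β ρ hv, Fin.ext_iff] using h v (by omega) v.isLt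

/-- `b k` is the expected number of crossings of the edge `{k, k + 1}` upwards; at `p = 0` the
truncated subtraction makes `b (p - 1)` read `b 0 = 0`. -/
def IsPathTrace (n : ℕ) (S : Set ℝ) (r : Fin n → ℝ) : Prop :=
  ∃ b : ℕ → ℝ, b 0 = 0 ∧ b (n - 1) = 0 ∧ (∀ k, 1 ≤ k → k + 2 ≤ n → b k ∈ S) ∧
    ∀ p : Fin n, r p = 1 + b (p - 1) + b p

theorem potential_pos_of_unit_current {β ρ : Fin n → ℝ} (h0 : 0 < n) (hβ : ∀ v, 0 < β v)
    (hρ0 : ρ ⟨0, h0⟩ = 0) (hcur : ∀ j, j + 1 < n → edgeCurrent β ρ j = 1) :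
    ∀ k, k + 1 < n → 0 < extendByZero ρ (k + 1) := by
  have hstep : ∀ k, k + 1 < n → 0 ≤ extendByZero ρ k → 0 < extendByZero ρ (k + 1) := by
    intro k hk hρk
    have hcurk := hcur k hk
    rw [edgeCurrent] at hcurk
    have := mul_nonneg (extendByZero_pos hβ hk).le hρk
    exact pos_of_mul_pos_right (show 0 < extendByZero β k * extendByZero ρ (k + 1) by linarith)
      (extendByZero_pos hβ (by omega)).le
  intro k
  induction k with
  | zero => exact fun hk => hstep 0 hk (by simp [extendByZero, h0, hρ0])
  | succ k ih => exact fun hk => hstep (k + 1) hk (ih (by omega)).le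

theorem IsUnitFlow.isPathTrace {r β ρ : Fin n → ℝ} {h0 : 0 < n} (h : IsUnitFlow h0 r β ρ) :
    IsPathTrace n (Set.Ioi 0) r := by
  obtain ⟨hβ, hr0, hρ0, hr, hcur⟩ := h
  refine ⟨fun k => extendByZero β (k + 1) * extendByZero ρ k, ?_, ?_, fun k hk1 hk2 => ?_,
    fun p => ?_⟩
  · simp [extendByZero, h0, hρ0]
  · simp [Nat.sub_add_cancel h0, extendByZero_of_le]
  · obtain ⟨j, rfl⟩ : ∃ j, k = j + 1 := ⟨k - 1, by omega⟩
    exact mul_pos (extendByZero_pos hβ (by omega))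
      (potential_pos_of_unit_current h0 hβ hρ0 hcur j (by omega))
  · by_cases hp : (p : ℕ) = 0
    · simp [show p = ⟨0, h0⟩ from Fin.ext hp, hr0, extendByZero, h0, hρ0]
    · have hcurp := hcur (p - 1) (by omega)
      rw [edgeCurrent, Nat.sub_add_cancel (by omega)] at hcurp
      dsimp only
      rw [hr p hp, Nat.sub_add_cancel (by omega)]
      simp only [extendByZero_val] at hcurp ⊢
      linear_combination hcurp

variable {b : ℕ → ℝ}

/-- The ratio `β (j + 2) / β j = b (j + 1) / (1 + b j)` is that of the upward crossings of
`{j + 1, j + 2}` to the downward crossings of `{j, j + 1}`, both of which leave `j + 1`. -/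
def pathWeight (b : ℕ → ℝ) : ℕ → ℝ
  | 0 => 1
  | 1 => 1
  | j + 2 => pathWeight b j * b (j + 1) / (1 + b j)

def pathPotential (b : ℕ → ℝ) : ℕ → ℝ
  | 0 => 0
  | j + 1 => (1 + b j) / pathWeight b j

theorem nonneg_of_eq_zero_of_pos (hb0 : b 0 = 0) (hb : ∀ k, 1 ≤ k → k + 2 ≤ n → 0 < b k)
    {k : ℕ} (hk : k + 2 ≤ n) : 0 ≤ b k := by
  rcases Nat.eq_zero_or_pos k with rfl | hk1
  · exact hb0.ge
  · exact (hb k hk1 hk).le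

theorem pathWeight_pos (hb0 : b 0 = 0) (hb : ∀ k, 1 ≤ k → k + 2 ≤ n → 0 < b k) :
    ∀ j, j < n → 0 < pathWeight b j := by
  intro j
  induction j using Nat.twoStepInduction with
  | zero => intro; exact one_pos
  | one => intro; exact one_pos
  | more j ih _ =>
    intro hj
    have := ih (by omega)
    have := hb (j + 1) (by omega) (by omega)
    have := nonneg_of_eq_zero_of_pos hb0 hb (k := j) (by omega)
    rw [pathWeight]
    positivity

theorem pathWeight_succ_mul_pathPotential (hb0 : b 0 = 0)
    (hb : ∀ k, 1 ≤ k → k + 2 ≤ n → 0 < b k) {j : ℕ} (hj : j + 1 < n) :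
    pathWeight b (j + 1) * pathPotential b j = b j := by
  rcases j with _ | j
  · simp [pathPotential, hb0]
  · have := pathWeight_pos hb0 hb j (by omega)
    have := nonneg_of_eq_zero_of_pos hb0 hb (k := j) (by omega)
    rw [pathWeight, pathPotential]
    field_simp

theorem IsPathTrace.exists_isUnitFlow {r : Fin n → ℝ} (hr : IsPathTrace n (Set.Ioi 0) r)
    (h0 : 0 < n) : ∃ β ρ, IsUnitFlow h0 r β ρ := by
  obtain ⟨b, hb0, hblast, hb, hrb⟩ := hr
  have hw := pathWeight_pos hb0 hb
  refine ⟨fun p => pathWeight b p, fun p => pathPotential b p, fun p => hw p p.isLt,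
    by simp [hrb, hb0], rfl, fun v hv => ?_, fun j hj => ?_⟩
  · obtain ⟨i, hi⟩ : ∃ i, (v : ℕ) = i + 1 := ⟨v - 1, by omega⟩
    have hρi : pathPotential b (i + 1) * pathWeight b i = 1 + b i :=
      div_mul_cancel₀ _ (hw i (by omega)).ne'
    dsimp only
    rw [hrb v, hi, extendByZero_restrict, extendByZero_restrict, if_pos (by omega),
      Nat.add_sub_cancel, mul_add, hρi]
    rcases Nat.lt_or_ge (i + 2) n with hin | hin
    · rw [if_pos hin, mul_comm, pathWeight_succ_mul_pathPotential hb0 hb hin]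
    · rw [if_neg (by omega), mul_zero, show i + 1 = n - 1 by omega, hblast]
  · have hwj := hw j (by omega)
    have := nonneg_of_eq_zero_of_pos hb0 hb (k := j) (by omega)
    rw [edgeCurrent, extendByZero_restrict, extendByZero_restrict, extendByZero_restrict,
      extendByZero_restrict, if_pos (by omega), if_pos hj, if_pos hj, if_pos (by omega),
      pathWeight_succ_mul_pathPotential hb0 hb hj, pathPotential, mul_div_cancel₀ _ hwj.ne']
    ring

theorem solvable_pathGraph_iff_isPathTrace (h0 : 0 < n) (r : Fin n → ℝ) :
    Solvable (pathGraph n) ⟨n - 1, by omega⟩ ⟨0, h0⟩ r ↔ IsPathTrace n (Set.Ioi 0) r := by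
  rw [solvable_pathGraph_iff h0]
  exact ⟨fun ⟨_, _, h⟩ => h.isPathTrace, fun h => h.exists_isUnitFlow h0⟩

end PathGraph

section PathWalks

open SimpleGraph

variable {n : ℕ} {u v : Fin n}

def upCrossings (w : (pathGraph n).Walk u v) (k : ℕ) : ℕ :=
  w.darts.countP fun d => (d.fst : ℕ) = k ∧ (d.snd : ℕ) = k + 1

def downCrossings (w : (pathGraph n).Walk u v) (k : ℕ) : ℕ :=
  w.darts.countP fun d => (d.fst : ℕ) = k + 1 ∧ (d.snd : ℕ) = k

theorem upCrossings_cons {w : Fin n} (h : (pathGraph n).Adj u w) (p : (pathGraph n).Walk w v)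
    (k : ℕ) : upCrossings (Walk.cons h p) k =
      (if (u : ℕ) = k ∧ (w : ℕ) = k + 1 then 1 else 0) + upCrossings p k := by
  simp [upCrossings, List.countP_cons, add_comm]

theorem upCrossings_append {w : Fin n} (p : (pathGraph n).Walk u w)
    (q : (pathGraph n).Walk w v) (k : ℕ) :
    upCrossings (p.append q) k = upCrossings p k + upCrossings q k := by
  simp [upCrossings, List.countP_append]

theorem upCrossings_pred (w : (pathGraph n).Walk u v) : upCrossings w (n - 1) = 0 := by
  rw [upCrossings, List.countP_eq_zero]
  intro d _ h
  have := d.snd.isLt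
  simp only [decide_eq_true_eq] at h
  omega

theorem countP_fst_eq_pathGraph (w : (pathGraph n).Walk u v) (x : Fin n) :
    w.darts.countP (fun d => d.fst = x) =
      upCrossings w x + if (x : ℕ) = 0 then 0 else downCrossings w (x - 1) := by
  induction w with
  | nil => simp [upCrossings, downCrossings]
  | @cons a c b h p ih =>
    have hadj := pathGraph_adj.mp h
    simp only [Walk.darts_cons, upCrossings, downCrossings, List.countP_cons] at *
    rw [ih]
    simp only [decide_eq_true_eq, Fin.ext_iff]
    split_ifs <;> omega

theorem downCrossings_sub_upCrossings (w : (pathGraph n).Walk u v) (k : ℕ) :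
    (downCrossings w k : ℤ) - upCrossings w k =
      (if (v : ℕ) ≤ k then 1 else 0) - (if (u : ℕ) ≤ k then 1 else 0) := by
  induction w with
  | nil => simp [upCrossings, downCrossings]
  | @cons a c b h p ih =>
    have hadj := pathGraph_adj.mp h
    simp only [Walk.darts_cons, upCrossings, downCrossings, List.countP_cons] at *
    simp only [decide_eq_true_eq]
    split_ifs at * <;> push_cast <;> omega

theorem upCrossings_zero_of_isProper (h0 : 0 < n)
    {ω : (pathGraph n).Walk ⟨n - 1, by omega⟩ ⟨0, h0⟩} (hω : IsProper ω) :
    upCrossings ω 0 = 0 := by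
  have h := ω.count_support_eq_countP_fst ⟨0, h0⟩
  rw [countP_fst_eq_pathGraph, hω, if_pos rfl, if_pos rfl] at h
  simpa using h

theorem count_support_of_isProper (h0 : 0 < n)
    {ω : (pathGraph n).Walk ⟨n - 1, by omega⟩ ⟨0, h0⟩} (hω : IsProper ω) (p : Fin n) :
    ω.support.count p = 1 + upCrossings ω (p - 1) + upCrossings ω p := by
  by_cases hp : (p : ℕ) = 0
  · rw [show p = ⟨0, h0⟩ from Fin.ext hp, hω]
    simp [upCrossings_zero_of_isProper h0 hω]
  · have hcross := downCrossings_sub_upCrossings ω (p - 1)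
    rw [if_pos (Nat.zero_le _), if_neg (show ¬(n - 1 ≤ (p : ℕ) - 1) by omega)] at hcross
    rw [ω.count_support_eq_countP_fst, countP_fst_eq_pathGraph, if_neg hp,
      if_neg (by rintro rfl; exact hp rfl)]
    omega

theorem isPathTrace_trace (h0 : 0 < n) {ω : (pathGraph n).Walk ⟨n - 1, by omega⟩ ⟨0, h0⟩}
    (hω : IsProper ω) : IsPathTrace n (Set.range Nat.cast) (trace ω) := by
  refine ⟨fun k => upCrossings ω k, ?_, by simp [upCrossings_pred], fun k _ _ => ⟨_, rfl⟩,
    fun p => ?_⟩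
  · simpa using upCrossings_zero_of_isProper h0 hω
  · simp [trace, count_support_of_isProper h0 hω p]

theorem pathGraph_adj_succ (k : ℕ) (hk : k + 1 < n) :
    (pathGraph n).Adj ⟨k, by omega⟩ ⟨k + 1, hk⟩ :=
  pathGraph_adj.mpr (Or.inl rfl)

def pathBounce (k : ℕ) (hk : k + 1 < n) : ℕ → (pathGraph n).Walk ⟨k, by omega⟩ ⟨k, by omega⟩
  | 0 => Walk.nil
  | j + 1 => Walk.cons (pathGraph_adj_succ k hk)
      (Walk.cons (pathGraph_adj_succ k hk).symm (pathBounce k hk j))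

def pathDescent (m : ℕ → ℕ) : (k : ℕ) → (hk : k < n) → (pathGraph n).Walk ⟨k, hk⟩ ⟨0, by omega⟩
  | 0, _ => Walk.nil
  | k + 1, hk => Walk.cons (pathGraph_adj_succ k hk).symm
      ((pathBounce k hk (m k)).append (pathDescent m k (by omega)))

theorem upCrossings_pathBounce (k : ℕ) (hk : k + 1 < n) (j i : ℕ) :
    upCrossings (pathBounce k hk j) i = if i = k then j else 0 := by
  induction j with
  | zero => simp [pathBounce, upCrossings]
  | succ j ih =>
    rw [pathBounce, upCrossings_cons, upCrossings_cons, ih]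
    simp only
    split_ifs <;> omega

theorem upCrossings_pathDescent (m : ℕ → ℕ) (k : ℕ) (hk : k < n) (i : ℕ) :
    upCrossings (pathDescent m k hk) i = if i < k then m i else 0 := by
  induction k with
  | zero => simp [pathDescent, upCrossings]
  | succ k ih =>
    rw [pathDescent, upCrossings_cons, upCrossings_append, upCrossings_pathBounce, ih]
    by_cases hik : i = k
    · simp [hik]
    · simp only
      split_ifs <;> omega

theorem isProper_pathDescent (h0 : 0 < n) {m : ℕ → ℕ} (hm0 : m 0 = 0) :
    IsProper (pathDescent m (n - 1) (by omega) :
      (pathGraph n).Walk ⟨n - 1, by omega⟩ ⟨0, h0⟩) := by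
  rw [IsProper, Walk.count_support_eq_countP_fst, countP_fst_eq_pathGraph, upCrossings_pathDescent]
  simp [hm0]

theorem traceSet_pathGraph (h0 : 0 < n) :
    traceSet (pathGraph n) ⟨n - 1, by omega⟩ ⟨0, h0⟩ =
      {r | IsPathTrace n (Set.range Nat.cast) r} := by
  ext r
  constructor
  · rintro ⟨ω, hω, rfl⟩
    exact isPathTrace_trace h0 hω
  · rintro ⟨b, hb0, hblast, hb, hrb⟩
    have hfloor : ∀ k, k + 1 < n → (⌊b k⌋₊ : ℝ) = b k := by
      intro k hk
      rcases Nat.eq_zero_or_pos k with rfl | hk1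
      · simp [hb0]
      · obtain ⟨j, hj⟩ := hb k hk1 (by omega)
        simp [← hj]
    set ω : (pathGraph n).Walk ⟨n - 1, by omega⟩ ⟨0, h0⟩ :=
      pathDescent (fun k => ⌊b k⌋₊) (n - 1) (by omega)
    have hω : IsProper ω := isProper_pathDescent h0 (by simp [hb0])
    have hup : ∀ k, k < n → (upCrossings ω k : ℝ) = b k := by
      intro k hk
      rw [upCrossings_pathDescent]
      split_ifs with hkn
      · exact hfloor k (by omega)
      · simp [show k = n - 1 by omega, hblast]
    refine ⟨ω, hω, funext fun p => ?_⟩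
    simp [trace, count_support_of_isProper h0 hω, hrb, hup p p.isLt, hup (p - 1) (by omega)]

end PathWalks

section PathTraceEquiv

open Set

variable {n : ℕ}

def traceShift (n : ℕ) : (Fin n → ℝ) →ₗ[ℝ] Fin n → ℝ where
  toFun x p := x ⟨p - 1, by omega⟩ + x p
  map_add' x y := by ext; simp only [Pi.add_apply]; ring
  map_smul' c x := by ext; simp only [Pi.smul_apply, smul_eq_mul, RingHom.id_apply]; ring

theorem traceShift_injective : Function.Injective (traceShift n) := by
  rw [← LinearMap.ker_eq_bot, LinearMap.ker_eq_bot']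
  intro x hx
  have hzero : ∀ k (hk : k < n), x ⟨k, hk⟩ = 0 := by
    intro k
    induction k with
    | zero =>
      intro hk
      have := congrFun hx ⟨0, hk⟩
      simp only [traceShift, LinearMap.coe_mk, AddHom.coe_mk, zero_tsub, Pi.zero_apply] at this
      linarith
    | succ k ih =>
      intro hk
      simpa [traceShift, ih (by omega)] using congrFun hx ⟨k + 1, hk⟩
  exact funext fun p => hzero p p.isLt

def IsInnerVertex (n : ℕ) (j : Fin n) : Prop := (j : ℕ) ≠ 0 ∧ (j : ℕ) ≠ n - 1

/-- The inner coordinates are the upward crossing numbers `b` of `IsPathTrace`; the boundary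
coordinates, which vanish on traces, only make the map bijective. -/
def pathTraceEquiv (n : ℕ) :
    ({j // IsInnerVertex n j} → ℝ) × ({j // ¬IsInnerVertex n j} → ℝ) ≃ᵃ[ℝ] (Fin n → ℝ) :=
  ((piSplit ℝ _).symm.trans
    (LinearEquiv.ofInjectiveEndo _ traceShift_injective)).toAffineEquiv.trans
      (AffineEquiv.constVAdd ℝ _ 1)

theorem pathTraceEquiv_apply (a : {j // IsInnerVertex n j} → ℝ)
    (c : {j // ¬IsInnerVertex n j} → ℝ) (p : Fin n) :
    pathTraceEquiv n (a, c) p = 1 + (piSplit ℝ _).symm (a, c) ⟨p - 1, by omega⟩ +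
      (piSplit ℝ _).symm (a, c) p := by
  simp [pathTraceEquiv, traceShift, add_assoc]

theorem setOf_isPathTrace_eq_image (S : Set ℝ) :
    {r | IsPathTrace n S r} = pathTraceEquiv n '' (univ.pi (fun _ => S) ×ˢ {0}) := by
  ext r
  constructor
  · rintro ⟨b, hb0, hblast, hb, hrb⟩
    have hsplit : ∀ q : Fin n, (piSplit ℝ (IsInnerVertex n)).symm (fun j => b j.1, 0) q = b q := by
      intro q
      rw [piSplit_symm_apply]
      split_ifs with hq
      · rfl
      · rcases not_and_or.mp hq with hq | hq <;> simp only [not_not] at hq <;>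
          simp [hq, hb0, hblast]
    refine ⟨(fun j => b j.1, 0),
      ⟨fun j _ => hb j (by have := j.2.1; omega) (by have := j.2.2; omega), rfl⟩,
      funext fun p => ?_⟩
    rw [pathTraceEquiv_apply, hsplit, hsplit, hrb]
  · rintro ⟨⟨a, c⟩, ⟨ha, rfl : c = 0⟩, rfl⟩
    have hbdry : ∀ k, ¬(k ≠ 0 ∧ k ≠ n - 1) →
        extendByZero ((piSplit ℝ (IsInnerVertex n)).symm (a, 0)) k = 0 := by
      intro k hk
      rw [extendByZero]
      split_ifs with hkn
      · rw [piSplit_symm_apply, dif_neg (show ¬IsInnerVertex n ⟨k, hkn⟩ from hk)]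
        rfl
      · rfl
    refine ⟨extendByZero ((piSplit ℝ (IsInnerVertex n)).symm (a, 0)), hbdry 0 (by simp),
      hbdry (n - 1) (by simp), fun k hk1 hk2 => ?_, fun p => ?_⟩
    · rw [extendByZero, dif_pos (by omega), piSplit_symm_apply,
        dif_pos (show IsInnerVertex n ⟨k, by omega⟩ from show k ≠ 0 ∧ k ≠ n - 1 by omega)]
      exact ha _ (mem_univ _)
    · rw [pathTraceEquiv_apply, extendByZero_val, extendByZero, dif_pos (by omega)]

end PathTraceEquiv

/-- For the path graph on `v_1, …, v_n` with `vout = v_1`, `vin = v_n`, the equation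
`τ_ρ = r` is solvable iff `r ∈ Ψ(G)`. -/
theorem solvable_iff_mem_Psi_pathGraph (n : ℕ) (hn : 3 ≤ n) (r : Fin n → ℝ) :
    Solvable (SimpleGraph.pathGraph n) ⟨n - 1, by omega⟩ ⟨0, by omega⟩ r ↔
      r ∈ Psi (SimpleGraph.pathGraph n) ⟨n - 1, by omega⟩ ⟨0, by omega⟩ := by
  have h0 : 0 < n := by omega
  rw [solvable_pathGraph_iff_isPathTrace h0, ← Set.mem_ofPred_eq (p := IsPathTrace n _), Psi,
    traceSet_pathGraph h0, setOf_isPathTrace_eq_image, setOf_isPathTrace_eq_image,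
    ← AffineEquiv.coe_toAffineMap, ← AffineMap.image_convexHull, convexHull_prod, convexHull_pi,
    convexHull_range_natCast, convexHull_singleton, AffineEquiv.coe_toAffineMap,
    AffineEquiv.intrinsicInterior_image, intrinsicInterior_prod_eq, intrinsicInterior_pi_Ici,
    intrinsicInterior_singleton]

end
end
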